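/- Let T be a finite tree with at least one edge and v a vertex of T. For k ≥ 0 let T_k be the tree obtained from T by attaching k new pendant edges at v, and set λ_k = λ_max(R_{T_k}). Then lim_{k→∞} λ_k = 0 if and only if λ_max(M^v) ≤ 0, where M^v is the Dirichlet matrix of T at v. -/

import Mathlib

open SimpleGraph Matrix Finset

/-- The largest eigenvalue of a real matrix, defined as the supremum of its set of
real eigenvalues. -/
noncomputable def lambdaMax {n : Type*} [Fintype n] (M : Matrix n n ℝ) : ℝ :=
  sSup {μ : ℝ | ∃ x : n → ℝ, x ≠ 0 ∧ M.mulVec x = μ • x}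

/-- The Ricci matrix of a graph: `(R)_{e,e} = -(1/d_x + 1/d_y)` for `e = {x,y}`,
`(R)_{e,e'} = 1/d_z` for distinct edges sharing the endpoint `z`, and `0` for
disjoint edges. -/
noncomputable def ricciMatrix {V : Type*} [Fintype V] [DecidableEq V]
    (G : SimpleGraph V) [DecidableRel G.Adj] :
    Matrix G.edgeSet G.edgeSet ℝ := fun e e' =>
  (if e = e' then (-1 : ℝ) else 1) *
    ∑ z : V, (if z ∈ (e : Sym2 V) ∧ z ∈ (e' : Sym2 V) then ((G.degree z : ℝ))⁻¹ else 0)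

/-- Adjacency for the tree obtained by attaching `k` new pendant vertices at `v`. -/
def addLeavesAdj {V : Type*} (G : SimpleGraph V) (v : V) (k : ℕ) :
    V ⊕ Fin k → V ⊕ Fin k → Prop
  | Sum.inl x, Sum.inl y => G.Adj x y
  | Sum.inl x, Sum.inr _ => x = v
  | Sum.inr _, Sum.inl y => y = v
  | Sum.inr _, Sum.inr _ => False

/-- The tree obtained from `G` by attaching `k` new pendant edges at `v`:
`k` new vertices `Sum.inr i`, each joined to `v` by a new edge. -/
def addLeaves {V : Type*} (G : SimpleGraph V) (v : V) (k : ℕ) :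
    SimpleGraph (V ⊕ Fin k) where
  Adj := addLeavesAdj G v k
  symm := by
    constructor
    intro a b h
    cases a <;> cases b <;> simp_all [addLeavesAdj] <;> exact h.symm
  loopless := by
    constructor
    intro a
    cases a <;> simp [addLeavesAdj]

instance {V : Type*} [DecidableEq V] (G : SimpleGraph V) [DecidableRel G.Adj]
    (v : V) (k : ℕ) : DecidableRel (addLeaves G v k).Adj := fun a b =>
  match a, b with
  | Sum.inl x, Sum.inl y => inferInstanceAs (Decidable (G.Adj x y))
  | Sum.inl x, Sum.inr _ => inferInstanceAs (Decidable (x = v))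
  | Sum.inr _, Sum.inl y => inferInstanceAs (Decidable (y = v))
  | Sum.inr _, Sum.inr _ => inferInstanceAs (Decidable False)

/-- The extension `f_y` of an edge function `f` on `G` to `addLeaves G v 1`:
it agrees with `f` on (the images of) old edges and takes the value `y` on the new
pendant edge. -/
noncomputable def extendLeaf {V : Type*} [Fintype V] [DecidableEq V]
    (G : SimpleGraph V) [DecidableRel G.Adj] (v : V) (f : G.edgeSet → ℝ) (y : ℝ) :
    (addLeaves G v 1).edgeSet → ℝ := fun e =>
  if h : ∃ e₀ : G.edgeSet, Sym2.map Sum.inl (e₀ : Sym2 V) = (e : Sym2 (V ⊕ Fin 1))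
  then f h.choose else y

/-- The Dirichlet matrix `M^v` of `G` at `v`: obtained from the Ricci matrix by setting
every occurrence of `1/d_v` to zero (Dirichlet boundary condition at `v`). -/
noncomputable def dirichletMatrix {V : Type*} [Fintype V] [DecidableEq V]
    (G : SimpleGraph V) [DecidableRel G.Adj] (v : V) :
    Matrix G.edgeSet G.edgeSet ℝ := fun e e' =>
  (if e = e' then (-1 : ℝ) else 1) *
    ∑ z : V, (if z ∈ (e : Sym2 V) ∧ z ∈ (e' : Sym2 V) ∧ z ≠ v
      then ((G.degree z : ℝ))⁻¹ else 0)

/-!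
Write a function `g` on the edges of `T_k` as `f` on the old edges and `y` on the `k` new ones.
Both `R_T` and `M^v` have the form `R_w = ∑_z w_z (b_z b_zᵀ - 2 diag b_z)`, where `b_z` is the
indicator of the edges at `z` (`w_z = 1/d_z`, resp. the same with `w_v = 0`). Only `v` and the new
leaves meet the new edges, so, with `d = d_v`,
`⟪g, R_{T_k} g⟫ = ⟪f, M^v f⟫ + ((a + ∑ y)² - 2 (Q + ∑ y²)) / (d + k) - ∑ y²`,
where `a` and `Q` are the sum and the sum of squares of `f` over the edges at `v`.

Extending an eigenvector of `M^v` with eigenvalue `μ` by zero gives `λ_k ≥ μ - 2 / (d + k)`, so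
`λ_k → 0` forces every eigenvalue of `M^v` to be `≤ 0`. Conversely, if `M^v` is negative
semidefinite, then `(a + ∑ y)² ≤ (1 + ε) (∑ y)² + (1 + 1/ε) a²` and Cauchy–Schwarz give
`λ_k ≤ ε + (1 + 1/ε) |E(T)| / (d + k)` for every `ε > 0`, while the indicator of the new edges
gives `λ_k ≥ -(d + 2) / (d + k)`.
-/

open Filter Topology

section Spectrum

variable {n : Type*} [Fintype n] [DecidableEq n]

theorem setOf_mulVec_eq_smul_eq_spectrum {K : Type*} [Field K] (M : Matrix n n K) :
    {μ : K | ∃ x : n → K, x ≠ 0 ∧ M *ᵥ x = μ • x} = spectrum K M := by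
  ext μ
  rw [← spectrum_toLin', ← Module.End.hasEigenvalue_iff_mem_spectrum]
  constructor
  · rintro ⟨x, hx, hMx⟩
    exact Module.End.hasEigenvalue_of_hasEigenvector
      ⟨Module.End.mem_eigenspace_iff.mpr (by simpa using hMx), hx⟩
  · intro h
    obtain ⟨x, hx, hx0⟩ := h.exists_hasEigenvector
    exact ⟨x, hx0, by simpa using Module.End.mem_eigenspace_iff.mp hx⟩

theorem lambdaMax_eq_sSup_spectrum (M : Matrix n n ℝ) : lambdaMax M = sSup (spectrum ℝ M) := by
  rw [lambdaMax, setOf_mulVec_eq_smul_eq_spectrum]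

theorem le_lambdaMax_of_mem_spectrum {M : Matrix n n ℝ} {μ : ℝ} (hμ : μ ∈ spectrum ℝ M) :
    μ ≤ lambdaMax M := by
  rw [lambdaMax_eq_sSup_spectrum]
  exact le_csSup M.finite_real_spectrum.bddAbove hμ

open scoped MatrixOrder in
theorem dotProduct_mulVec_le_lambdaMax_mul {M : Matrix n n ℝ} (hM : M.IsHermitian)
    (x : n → ℝ) : x ⬝ᵥ M *ᵥ x ≤ lambdaMax M * (x ⬝ᵥ x) := by
  have hle : M ≤ algebraMap ℝ _ (lambdaMax M) :=
    le_algebraMap_of_spectrum_le (fun _ hμ => le_lambdaMax_of_mem_spectrum hμ) hM.isSelfAdjoint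
  simpa [sub_mulVec, Algebra.algebraMap_eq_smul_one, smul_mulVec, dotProduct_sub,
    dotProduct_smul] using (Matrix.le_iff.mp hle).dotProduct_mulVec_nonneg x

theorem le_lambdaMax_of_mul_le_dotProduct_mulVec {M : Matrix n n ℝ} (hM : M.IsHermitian)
    {x : n → ℝ} (hx : x ≠ 0) {c : ℝ} (h : c * (x ⬝ᵥ x) ≤ x ⬝ᵥ M *ᵥ x) : c ≤ lambdaMax M :=
  le_of_mul_le_mul_right (h.trans (dotProduct_mulVec_le_lambdaMax_mul hM x))
    (dotProduct_self_star_pos_iff.mpr hx)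

theorem lambdaMax_le_of_dotProduct_mulVec_le [Nonempty n] {M : Matrix n n ℝ}
    (hM : M.IsHermitian) {c : ℝ} (h : ∀ x, x ⬝ᵥ M *ᵥ x ≤ c * (x ⬝ᵥ x)) : lambdaMax M ≤ c := by
  rw [lambdaMax, setOf_mulVec_eq_smul_eq_spectrum]
  refine csSup_le ⟨_, hM.eigenvalues_mem_spectrum_real (Classical.arbitrary n)⟩ fun μ hμ => ?_
  rw [← setOf_mulVec_eq_smul_eq_spectrum] at hμ
  obtain ⟨x, hx, hMx⟩ := hμ
  have hx' := h x
  rw [hMx, dotProduct_smul, smul_eq_mul] at hx'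
  exact le_of_mul_le_mul_right hx' (dotProduct_self_star_pos_iff.mpr hx)

end Spectrum

theorem add_sq_le_one_add_mul_sq_add {ε : ℝ} (hε : 0 < ε) (a b : ℝ) :
    (a + b) ^ 2 ≤ (1 + ε) * a ^ 2 + (1 + ε⁻¹) * b ^ 2 := by
  have h : (1 + ε) * a ^ 2 + (1 + ε⁻¹) * b ^ 2 - (a + b) ^ 2 = (ε * a - b) ^ 2 / ε := by
    field_simp
    ring
  linarith [div_nonneg (sq_nonneg (ε * a - b)) hε.le]

section WeightedRicci

variable {V : Type*} [Fintype V] [DecidableEq V] (G : SimpleGraph V)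

noncomputable def weightedRicciMatrix (w : V → ℝ) : Matrix G.edgeSet G.edgeSet ℝ := fun e e' =>
  (if e = e' then (-1 : ℝ) else 1) *
    ∑ z : V, (if z ∈ (e : Sym2 V) ∧ z ∈ (e' : Sym2 V) then w z else 0)

def incidenceVec (z : V) : G.edgeSet → ℝ := fun e => if z ∈ (e : Sym2 V) then 1 else 0

theorem weightedRicciMatrix_eq_sum (w : V → ℝ) :
    weightedRicciMatrix G w = ∑ z, w z •
      (vecMulVec (incidenceVec G z) (incidenceVec G z) - 2 • diagonal (incidenceVec G z)) := by
  ext e e'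
  simp only [weightedRicciMatrix, Matrix.sum_apply, Matrix.smul_apply, Matrix.sub_apply,
    vecMulVec_apply, diagonal_apply, incidenceVec, mul_sum]
  refine sum_congr rfl fun z _ => ?_
  by_cases h : e = e' <;> by_cases h1 : z ∈ (e : Sym2 V) <;> by_cases h2 : z ∈ (e' : Sym2 V) <;>
    norm_num [*]

theorem weightedRicciMatrix_isHermitian (w : V → ℝ) : (weightedRicciMatrix G w).IsHermitian := by
  ext e e'
  simp only [weightedRicciMatrix, conjTranspose_apply, star_trivial, eq_comm, and_comm]

variable [DecidableRel G.Adj]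

def incidentSum (x : G.edgeSet → ℝ) (z : V) : ℝ :=
  ∑ e : G.edgeSet, if z ∈ (e : Sym2 V) then x e else 0

theorem dotProduct_weightedRicciMatrix_mulVec (w : V → ℝ) (x : G.edgeSet → ℝ) :
    x ⬝ᵥ weightedRicciMatrix G w *ᵥ x =
      ∑ z, w z * (incidentSum G x z ^ 2 - 2 * incidentSum G (x ^ 2) z) := by
  simp only [weightedRicciMatrix_eq_sum, Matrix.sum_mulVec, dotProduct_sum, smul_mulVec,
    dotProduct_smul, sub_mulVec, dotProduct_sub, vecMulVec_mulVec]
  refine sum_congr rfl fun z _ => ?_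
  have hlin : incidenceVec G z ⬝ᵥ x = incidentSum G x z := by
    simp [dotProduct, incidenceVec, incidentSum]
  have hdiag : x ⬝ᵥ diagonal (incidenceVec G z) *ᵥ x = incidentSum G (x ^ 2) z := by
    simp only [dotProduct, mulVec_diagonal, incidenceVec, incidentSum]
    refine sum_congr rfl fun e _ => ?_
    split_ifs <;> simp [sq]
  rw [dotProduct_comm x, hlin, hdiag]
  simp [sq, smul_eq_mul]

theorem incidentSum_sq_le_dotProduct_self (x : G.edgeSet → ℝ) (z : V) :
    incidentSum G (x ^ 2) z ≤ x ⬝ᵥ x :=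
  sum_le_sum fun e _ => by split_ifs <;> simp [sq, mul_self_nonneg]

theorem sq_incidentSum_le (x : G.edgeSet → ℝ) (z : V) :
    incidentSum G x z ^ 2 ≤ Fintype.card G.edgeSet * incidentSum G (x ^ 2) z := by
  simpa [incidentSum, ite_pow] using sq_sum_le_card_mul_sum_sq (s := univ)
    (f := fun e : G.edgeSet => if z ∈ (e : Sym2 V) then x e else 0)

theorem ricciMatrix_eq_weightedRicciMatrix :
    ricciMatrix G = weightedRicciMatrix G (fun z => (G.degree z : ℝ)⁻¹) := rfl

theorem dirichletMatrix_eq_weightedRicciMatrix (v : V) :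
    dirichletMatrix G v =
      weightedRicciMatrix G (fun z => if z = v then 0 else (G.degree z : ℝ)⁻¹) := by
  ext e e'
  unfold dirichletMatrix weightedRicciMatrix
  congr 1
  refine sum_congr rfl fun z _ => ?_
  by_cases hz : z = v <;> simp [hz]

theorem ricciMatrix_isHermitian : (ricciMatrix G).IsHermitian :=
  weightedRicciMatrix_isHermitian G _

theorem dirichletMatrix_isHermitian (v : V) : (dirichletMatrix G v).IsHermitian := by
  rw [dirichletMatrix_eq_weightedRicciMatrix]
  exact weightedRicciMatrix_isHermitian G _

end WeightedRicci

section AddLeaves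

variable {V : Type*} (G : SimpleGraph V) (v : V) (k : ℕ)

@[simp] lemma addLeaves_adj_inl_inl (x y : V) :
    (addLeaves G v k).Adj (Sum.inl x) (Sum.inl y) ↔ G.Adj x y := Iff.rfl

@[simp] lemma addLeaves_adj_inl_inr (x : V) (i : Fin k) :
    (addLeaves G v k).Adj (Sum.inl x) (Sum.inr i) ↔ x = v := Iff.rfl

@[simp] lemma addLeaves_adj_inr_inl (i : Fin k) (y : V) :
    (addLeaves G v k).Adj (Sum.inr i) (Sum.inl y) ↔ y = v := Iff.rfl

@[simp] lemma not_addLeaves_adj_inr_inr (i j : Fin k) :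
    ¬ (addLeaves G v k).Adj (Sum.inr i) (Sum.inr j) := id

def oldEdge (e : G.edgeSet) : (addLeaves G v k).edgeSet :=
  ⟨Sym2.map Sum.inl e, by
    obtain ⟨e, he⟩ := e
    induction e using Sym2.ind with
    | _ x y => simpa using he⟩

def newEdge (i : Fin k) : (addLeaves G v k).edgeSet :=
  ⟨s(Sum.inl v, Sum.inr i), by simp⟩

@[simp] lemma mem_oldEdge_inl (z : V) (e : G.edgeSet) :
    Sum.inl z ∈ (oldEdge G v k e : Sym2 (V ⊕ Fin k)) ↔ z ∈ (e : Sym2 V) := by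
  simp [oldEdge, Sym2.mem_map]

@[simp] lemma not_mem_oldEdge_inr (i : Fin k) (e : G.edgeSet) :
    Sum.inr i ∉ (oldEdge G v k e : Sym2 (V ⊕ Fin k)) := by
  simp [oldEdge, Sym2.mem_map]

@[simp] lemma mem_newEdge_inl (z : V) (i : Fin k) :
    Sum.inl z ∈ (newEdge G v k i : Sym2 (V ⊕ Fin k)) ↔ z = v := by
  simp [newEdge]

@[simp] lemma mem_newEdge_inr (i j : Fin k) :
    Sum.inr i ∈ (newEdge G v k j : Sym2 (V ⊕ Fin k)) ↔ i = j := by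
  simp [newEdge]

theorem oldEdge_injective : Function.Injective (oldEdge G v k) := fun _ _ h =>
  Subtype.ext (Sym2.map.injective Sum.inl_injective (congrArg Subtype.val h))

theorem newEdge_injective : Function.Injective (newEdge G v k) := fun i _ h => by
  simpa using (congrArg (Sum.inr i ∈ ·.val) h).mp (by simp)

theorem oldEdge_ne_newEdge (e : G.edgeSet) (i : Fin k) : oldEdge G v k e ≠ newEdge G v k i :=
  fun h => not_mem_oldEdge_inr G v k i e (h ▸ by simp)

theorem bijective_sumElim_oldEdge_newEdge :
    Function.Bijective (Sum.elim (oldEdge G v k) (newEdge G v k)) := by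
  refine ⟨(oldEdge_injective G v k).sumElim (newEdge_injective G v k) (oldEdge_ne_newEdge G v k),
    fun ⟨e, he⟩ => ?_⟩
  induction e using Sym2.ind with
  | _ a b =>
    rcases a with x | i <;> rcases b with y | j
    · exact ⟨Sum.inl ⟨s(x, y), he⟩, rfl⟩
    · obtain rfl : x = v := he
      exact ⟨Sum.inr j, rfl⟩
    · obtain rfl : y = v := he
      exact ⟨Sum.inr i, Subtype.ext Sym2.eq_swap⟩
    · exact (not_addLeaves_adj_inr_inr G v k i j he).elim

noncomputable def addLeavesEdgeEquiv : G.edgeSet ⊕ Fin k ≃ (addLeaves G v k).edgeSet :=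
  Equiv.ofBijective _ (bijective_sumElim_oldEdge_newEdge G v k)

@[simp] lemma addLeavesEdgeEquiv_symm_oldEdge (e : G.edgeSet) :
    (addLeavesEdgeEquiv G v k).symm (oldEdge G v k e) = Sum.inl e :=
  (Equiv.symm_apply_eq _).mpr rfl

@[simp] lemma addLeavesEdgeEquiv_symm_newEdge (i : Fin k) :
    (addLeavesEdgeEquiv G v k).symm (newEdge G v k i) = Sum.inr i :=
  (Equiv.symm_apply_eq _).mpr rfl

variable [Fintype V] [DecidableEq V] [DecidableRel G.Adj]

theorem sum_edgeSet_addLeaves {M : Type*} [AddCommMonoid M] (F : (addLeaves G v k).edgeSet → M) :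
    ∑ ε, F ε = ∑ e, F (oldEdge G v k e) + ∑ i, F (newEdge G v k i) := by
  rw [← (addLeavesEdgeEquiv G v k).sum_comp, Fintype.sum_sum_type]
  rfl

theorem addLeaves_degree_inl (z : V) :
    (addLeaves G v k).degree (Sum.inl z) = G.degree z + if z = v then k else 0 := by
  simp only [← card_neighborFinset_eq_degree, neighborFinset_eq_filter, card_filter,
    Fintype.sum_sum_type]
  by_cases hz : z = v <;> simp [hz]

theorem addLeaves_degree_inr (i : Fin k) : (addLeaves G v k).degree (Sum.inr i) = 1 := by
  simp only [← card_neighborFinset_eq_degree, neighborFinset_eq_filter, card_filter,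
    Fintype.sum_sum_type]
  simp

theorem incidentSum_addLeaves_inl (g : (addLeaves G v k).edgeSet → ℝ) (z : V) :
    incidentSum (addLeaves G v k) g (Sum.inl z) =
      incidentSum G (g ∘ oldEdge G v k) z + if z = v then ∑ i, g (newEdge G v k i) else 0 := by
  rw [incidentSum, sum_edgeSet_addLeaves]
  by_cases hz : z = v <;> simp [hz, incidentSum]

theorem incidentSum_addLeaves_inr (g : (addLeaves G v k).edgeSet → ℝ) (i : Fin k) :
    incidentSum (addLeaves G v k) g (Sum.inr i) = g (newEdge G v k i) := by
  simp [incidentSum, sum_edgeSet_addLeaves]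

theorem dotProduct_ricciMatrix_addLeaves_mulVec (g : (addLeaves G v k).edgeSet → ℝ) :
    g ⬝ᵥ ricciMatrix (addLeaves G v k) *ᵥ g =
      (g ∘ oldEdge G v k) ⬝ᵥ dirichletMatrix G v *ᵥ (g ∘ oldEdge G v k) +
        ((G.degree v : ℝ) + k)⁻¹ *
          ((incidentSum G (g ∘ oldEdge G v k) v + ∑ i, g (newEdge G v k i)) ^ 2 -
            2 * (incidentSum G ((g ∘ oldEdge G v k) ^ 2) v + ∑ i, g (newEdge G v k i) ^ 2)) -
        ∑ i, g (newEdge G v k i) ^ 2 := by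
  rw [ricciMatrix_eq_weightedRicciMatrix, dotProduct_weightedRicciMatrix_mulVec,
    Fintype.sum_sum_type, dirichletMatrix_eq_weightedRicciMatrix,
    dotProduct_weightedRicciMatrix_mulVec, Fintype.sum_eq_add_sum_subtype_ne _ v,
    Fintype.sum_eq_add_sum_subtype_ne _ v]
  have hne (z : {z // z ≠ v}) : (z : V) ≠ v := z.2
  have hcomp : (g ^ 2) ∘ oldEdge G v k = (g ∘ oldEdge G v k) ^ 2 := rfl
  simp only [incidentSum_addLeaves_inl, incidentSum_addLeaves_inr, addLeaves_degree_inl,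
    addLeaves_degree_inr, hne, hcomp, if_true, if_false, Pi.pow_apply, Nat.cast_add, Nat.cast_one,
    inv_one, one_mul, add_zero, zero_mul, zero_add, sum_sub_distrib, ← mul_sum]
  ring

theorem dotProduct_self_addLeaves (g : (addLeaves G v k).edgeSet → ℝ) :
    g ⬝ᵥ g = (g ∘ oldEdge G v k) ⬝ᵥ (g ∘ oldEdge G v k) + ∑ i, g (newEdge G v k i) ^ 2 := by
  simp [dotProduct, sum_edgeSet_addLeaves, sq]

theorem sub_two_div_le_lambdaMax_ricciMatrix_addLeaves {μ : ℝ} {x : G.edgeSet → ℝ} (hx : x ≠ 0)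
    (hμ : dirichletMatrix G v *ᵥ x = μ • x) :
    μ - 2 / ((G.degree v : ℝ) + k) ≤ lambdaMax (ricciMatrix (addLeaves G v k)) := by
  set g := Sum.elim x 0 ∘ (addLeavesEdgeEquiv G v k).symm
  have hold : g ∘ oldEdge G v k = x := funext fun e => by simp [g]
  have hnew (i : Fin k) : g (newEdge G v k i) = 0 := by simp [g]
  have hg : g ≠ 0 := fun h => hx (by rw [← hold, h]; rfl)
  refine le_lambdaMax_of_mul_le_dotProduct_mulVec (ricciMatrix_isHermitian _) hg ?_
  rw [dotProduct_ricciMatrix_addLeaves_mulVec, dotProduct_self_addLeaves, hold, hμ,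
    dotProduct_smul, smul_eq_mul]
  simp only [hnew, sum_const_zero, add_zero, sub_zero, zero_pow two_ne_zero]
  have hQ := incidentSum_sq_le_dotProduct_self G x v
  have hn : 0 ≤ ((G.degree v : ℝ) + k)⁻¹ := by positivity
  rw [div_eq_mul_inv]
  nlinarith [mul_le_mul_of_nonneg_left hQ hn, mul_nonneg hn (sq_nonneg (incidentSum G x v))]

theorem neg_div_le_lambdaMax_ricciMatrix_addLeaves (hk : k ≠ 0) :
    -(((G.degree v : ℝ) + 2) / ((G.degree v : ℝ) + k)) ≤
      lambdaMax (ricciMatrix (addLeaves G v k)) := by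
  set g := Sum.elim (0 : G.edgeSet → ℝ) (1 : Fin k → ℝ) ∘ (addLeavesEdgeEquiv G v k).symm
  have hold : g ∘ oldEdge G v k = 0 := funext fun e => by simp [g]
  have hnew (i : Fin k) : g (newEdge G v k i) = 1 := by simp [g]
  have hg : g ≠ 0 := fun h => by simpa [h] using hnew ⟨0, Nat.pos_of_ne_zero hk⟩
  refine le_lambdaMax_of_mul_le_dotProduct_mulVec (ricciMatrix_isHermitian _) hg (le_of_eq ?_)
  rw [dotProduct_ricciMatrix_addLeaves_mulVec, dotProduct_self_addLeaves, hold]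
  have hn : (G.degree v : ℝ) + k ≠ 0 := by positivity
  simp [hnew, incidentSum]
  field_simp
  ring

theorem lambdaMax_ricciMatrix_addLeaves_le (hD : lambdaMax (dirichletMatrix G v) ≤ 0)
    (hk : k ≠ 0) {ε : ℝ} (hε : 0 < ε) :
    lambdaMax (ricciMatrix (addLeaves G v k)) ≤
      ε + (1 + ε⁻¹) * Fintype.card G.edgeSet / ((G.degree v : ℝ) + k) := by
  have : Nonempty (addLeaves G v k).edgeSet := ⟨newEdge G v k ⟨0, Nat.pos_of_ne_zero hk⟩⟩
  refine lambdaMax_le_of_dotProduct_mulVec_le (ricciMatrix_isHermitian _) fun g => ?_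
  rw [dotProduct_ricciMatrix_addLeaves_mulVec, dotProduct_self_addLeaves]
  set f := g ∘ oldEdge G v k
  set a := incidentSum G f v
  set Q := incidentSum G (f ^ 2) v
  set s := ∑ i, g (newEdge G v k i)
  set q := ∑ i, g (newEdge G v k i) ^ 2
  set m : ℝ := ((Fintype.card G.edgeSet : ℕ) : ℝ)
  set n : ℝ := (G.degree v : ℝ) + k
  have hn : 0 < n := by positivity
  have hDf : f ⬝ᵥ dirichletMatrix G v *ᵥ f ≤ 0 :=
    (dotProduct_mulVec_le_lambdaMax_mul (dirichletMatrix_isHermitian G v) f).trans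
      (mul_nonpos_of_nonpos_of_nonneg hD (dotProduct_self_star_nonneg f))
  have hq : 0 ≤ q := sum_nonneg fun i _ => sq_nonneg _
  have hQ : 0 ≤ Q := sum_nonneg fun e _ => by split_ifs <;> simp [sq_nonneg]
  have hQf : Q ≤ f ⬝ᵥ f := incidentSum_sq_le_dotProduct_self G f v
  have hs : s ^ 2 ≤ k * q := by
    simpa using sq_sum_le_card_mul_sum_sq (s := univ) (f := fun i => g (newEdge G v k i))
  have hkn : n⁻¹ * k ≤ 1 := by
    rw [inv_mul_le_iff₀ hn, mul_one]
    exact le_add_of_nonneg_left (Nat.cast_nonneg (G.degree v))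
  have hmix : n⁻¹ * (a + s) ^ 2 ≤ (1 + ε) * q + (1 + ε⁻¹) * m / n * (f ⬝ᵥ f) :=
    calc n⁻¹ * (a + s) ^ 2 ≤ n⁻¹ * ((1 + ε) * s ^ 2 + (1 + ε⁻¹) * a ^ 2) := by
          rw [add_comm a]
          gcongr
          exact add_sq_le_one_add_mul_sq_add hε s a
      _ ≤ n⁻¹ * ((1 + ε) * (k * q) + (1 + ε⁻¹) * (m * (f ⬝ᵥ f))) := by
          gcongr
          exact (sq_incidentSum_le G f v).trans (by gcongr)
      _ = (1 + ε) * q * (n⁻¹ * k) + (1 + ε⁻¹) * m / n * (f ⬝ᵥ f) := by ring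
      _ ≤ (1 + ε) * q + (1 + ε⁻¹) * m / n * (f ⬝ᵥ f) := by
          linarith [mul_le_of_le_one_right (by positivity : 0 ≤ (1 + ε) * q) hkn]
  have hc : 0 ≤ (1 + ε⁻¹) * m / n := by positivity
  nlinarith [mul_nonneg hc hq, mul_nonneg hε.le (dotProduct_self_star_nonneg f),
    mul_nonneg (inv_nonneg.mpr hn.le) (add_nonneg hQ hq)]

end AddLeaves

theorem lambdaMax_tendsto_zero_iff_general {V : Type*} [Fintype V] [DecidableEq V]
    (G : SimpleGraph V) [DecidableRel G.Adj]
    (v : V) :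
    Filter.Tendsto (fun k : ℕ => lambdaMax (ricciMatrix (addLeaves G v k)))
        Filter.atTop (nhds 0) ↔
      lambdaMax (dirichletMatrix G v) ≤ 0 := by
  have hn : Tendsto (fun k : ℕ => (G.degree v : ℝ) + k) atTop atTop :=
    tendsto_atTop_add_const_left _ _ tendsto_natCast_atTop_atTop
  refine ⟨fun h => Real.sSup_nonpos fun μ ⟨x, hx, hμ⟩ => ?_, fun hD => ?_⟩
  · have hlim : Tendsto (fun k : ℕ => μ - 2 / ((G.degree v : ℝ) + k)) atTop (𝓝 μ) := by
      simpa using tendsto_const_nhds.sub (tendsto_const_nhds.div_atTop hn)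
    exact le_of_tendsto_of_tendsto' hlim h
      fun k => sub_two_div_le_lambdaMax_ricciMatrix_addLeaves G v k hx hμ
  refine tendsto_order.mpr ⟨fun a ha => ?_, fun a ha => ?_⟩
  · have hlim : Tendsto (fun k : ℕ => -(((G.degree v : ℝ) + 2) / ((G.degree v : ℝ) + k)))
        atTop (𝓝 0) := by
      simpa using (tendsto_const_nhds.div_atTop hn).neg
    filter_upwards [hlim.eventually (lt_mem_nhds ha), eventually_ne_atTop 0] with k hk hk0
    exact hk.trans_le (neg_div_le_lambdaMax_ricciMatrix_addLeaves G v k hk0)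
  · have hlim : Tendsto (fun k : ℕ => a / 2 + (1 + (a / 2)⁻¹) * Fintype.card G.edgeSet /
        ((G.degree v : ℝ) + k)) atTop (𝓝 (a / 2)) := by
      simpa using tendsto_const_nhds.add (tendsto_const_nhds.div_atTop hn)
    filter_upwards [hlim.eventually (gt_mem_nhds (half_lt_self ha)), eventually_ne_atTop 0]
      with k hk hk0
    exact (lambdaMax_ricciMatrix_addLeaves_le G v k hD hk0 (half_pos ha)).trans_lt hk

/-- With `λ_k = λ_max(R_{T_k})`, we have `lim_{k→∞} λ_k = 0` if and only if
`λ_max(M^v) ≤ 0`, where `M^v` is the Dirichlet matrix of `T` at `v`. -/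
theorem lambdaMax_tendsto_zero_iff {V : Type*} [Fintype V] [DecidableEq V]
    (G : SimpleGraph V) [DecidableRel G.Adj]
    (hT : G.IsTree) (h1 : 1 ≤ G.edgeFinset.card) (v : V) :
    Filter.Tendsto (fun k : ℕ => lambdaMax (ricciMatrix (addLeaves G v k)))
        Filter.atTop (nhds 0) ↔
      lambdaMax (dirichletMatrix G v) ≤ 0 :=
  lambdaMax_tendsto_zero_iff_general G v
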